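/- arXiv:1910.11042 — 2 statements merged into one kernel-verified Lean document; each statement's English description precedes it below -/
import Mathlib

section
/- With B₁ = AB²A⁻¹ and p_B = (0,0,1)ᵀ, the following linear relations hold in ℂ³: B·B₁·p_B = 24·p_B + 3·B₁·p_B - 2·B₁⁻¹·p_B and B·B₁⁻¹·p_B = 8·p_B + 2·B₁·p_B - B₁⁻¹·p_B. -/
/-
The matrices `A` and `B` are unitriangular, so `A⁻¹`, `B⁻¹` and `B₁⁻¹ = A B⁻² A⁻¹` are explicit, and
the vectors `B₁^{±1} p_B = A B^{±2} A⁻¹ p_B` can be written down. All entries are polynomials in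
`√2` and `τ = i√3`, and both relations become polynomial identities modulo `√2² = 2` and `τ² = -3`.
-/

open Matrix Complex

noncomputable def A : Matrix (Fin 3) (Fin 3) ℂ :=
  !![1, -(Real.sqrt 2 : ℂ), (Real.sqrt 3 : ℂ) * Complex.I - 1;
     0, 1, (Real.sqrt 2 : ℂ);
     0, 0, 1]

noncomputable def B : Matrix (Fin 3) (Fin 3) ℂ :=
  !![1, 0, 0;
     (Real.sqrt 2 : ℂ), 1, 0;
     -(Real.sqrt 3 : ℂ) * Complex.I - 1, -(Real.sqrt 2 : ℂ), 1]

noncomputable def B₁ : Matrix (Fin 3) (Fin 3) ℂ := A * B ^ 2 * A⁻¹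

def pB : Fin 3 → ℂ := ![0, 0, 1]

noncomputable def herm (z w : Fin 3 → ℂ) : ℂ :=
  (starRingEnd ℂ) (z 0) * w 2 + (starRingEnd ℂ) (z 1) * w 1 + (starRingEnd ℂ) (z 2) * w 0

section Unitriangular

variable {R : Type*} [CommRing R]

def upperUnitriangular (a b c : R) : Matrix (Fin 3) (Fin 3) R := !![1, a, b; 0, 1, c; 0, 0, 1]

def lowerUnitriangular (a b c : R) : Matrix (Fin 3) (Fin 3) R := !![1, 0, 0; a, 1, 0; b, c, 1]

lemma upperUnitriangular_mul_upperUnitriangular (a b c a' b' c' : R) :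
    upperUnitriangular a b c * upperUnitriangular a' b' c' =
      upperUnitriangular (a + a') (b' + a * c' + b) (c + c') := by
  ext i j
  fin_cases i <;> fin_cases j <;> simp [upperUnitriangular, mul_apply, Fin.sum_univ_three] <;> ring

lemma upperUnitriangular_zero : upperUnitriangular (0 : R) 0 0 = 1 := by
  rw [upperUnitriangular, one_fin_three]

lemma upperUnitriangular_inv (a b c : R) :
    (upperUnitriangular a b c)⁻¹ = upperUnitriangular (-a) (a * c - b) (-c) := by
  refine inv_eq_right_inv ?_
  rw [upperUnitriangular_mul_upperUnitriangular, ← upperUnitriangular_zero]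
  congr 1 <;> ring

lemma det_upperUnitriangular (a b c : R) : (upperUnitriangular a b c).det = 1 := by
  simp [upperUnitriangular, det_fin_three]

lemma transpose_upperUnitriangular (a b c : R) :
    (upperUnitriangular a b c)ᵀ = lowerUnitriangular a b c := by
  ext i j
  fin_cases i <;> fin_cases j <;> rfl

lemma lowerUnitriangular_inv (a b c : R) :
    (lowerUnitriangular a b c)⁻¹ = lowerUnitriangular (-a) (a * c - b) (-c) := by
  rw [← transpose_upperUnitriangular, ← transpose_nonsing_inv, upperUnitriangular_inv,
    transpose_upperUnitriangular]

lemma upperUnitriangular_mulVec (a b c x y z : R) :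
    upperUnitriangular a b c *ᵥ ![x, y, z] = ![x + a * y + b * z, y + c * z, z] := by
  ext i; fin_cases i <;> simp [upperUnitriangular] <;> ring

lemma lowerUnitriangular_mulVec (a b c x y z : R) :
    lowerUnitriangular a b c *ᵥ ![x, y, z] = ![x, a * x + y, b * x + c * y + z] := by
  ext i; fin_cases i <;> simp [lowerUnitriangular] <;> ring

end Unitriangular

lemma Matrix.inv_conj {n R : Type*} [Fintype n] [DecidableEq n] [CommRing R]
    {P : Matrix n n R} (hP : IsUnit P.det) (M : Matrix n n R) :
    (P * M * P⁻¹)⁻¹ = P * M⁻¹ * P⁻¹ := by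
  rw [mul_inv_rev, mul_inv_rev, nonsing_inv_nonsing_inv _ hP, mul_assoc]

lemma A_eq_upperUnitriangular : A = upperUnitriangular (-√2 : ℂ) (√3 * I - 1) √2 := rfl

lemma B_eq_lowerUnitriangular : B = lowerUnitriangular (√2 : ℂ) (-√3 * I - 1) (-√2) := rfl

lemma B₁_inv : B₁⁻¹ = A * B⁻¹ ^ 2 * A⁻¹ := by
  have hA : IsUnit A.det := by
    rw [A_eq_upperUnitriangular, det_upperUnitriangular]; exact isUnit_one
  rw [B₁, inv_conj hA, inv_pow']

lemma sqrt_two_sq : ((√2 : ℝ) : ℂ) ^ 2 = 2 := by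
  rw [← ofReal_pow, Real.sq_sqrt zero_le_two]; norm_num

lemma sqrt_three_mul_I_sq : ((√3 : ℝ) * I : ℂ) ^ 2 = -3 := by
  rw [mul_pow, I_sq, ← ofReal_pow, Real.sq_sqrt (by norm_num)]; norm_num

lemma B₁_mulVec_pB : B₁ *ᵥ pB = ![-16, 4 * √2 * (√3 * I), 3 + 6 * (√3 * I)] := by
  simp only [B₁, sq, ← mulVec_mulVec]
  rw [A_eq_upperUnitriangular, B_eq_lowerUnitriangular, upperUnitriangular_inv, pB]
  simp only [upperUnitriangular_mulVec, lowerUnitriangular_mulVec]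
  refine vec3_eq ?_ ?_ ?_ <;> grind [sqrt_two_sq, sqrt_three_mul_I_sq]

lemma B₁_inv_mulVec_pB : B₁⁻¹ *ᵥ pB = ![-16, 8 * √2 + 4 * √2 * (√3 * I), 7 + 2 * (√3 * I)] := by
  rw [B₁_inv]
  simp only [sq, ← mulVec_mulVec]
  rw [A_eq_upperUnitriangular, B_eq_lowerUnitriangular, upperUnitriangular_inv,
    lowerUnitriangular_inv, pB]
  simp only [upperUnitriangular_mulVec, lowerUnitriangular_mulVec]
  refine vec3_eq ?_ ?_ ?_ <;> grind [sqrt_two_sq, sqrt_three_mul_I_sq]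

theorem stmt_13 :
    B.mulVec (B₁.mulVec pB) =
      (24 : ℂ) • pB + (3 : ℂ) • B₁.mulVec pB - (2 : ℂ) • B₁⁻¹.mulVec pB ∧
    B.mulVec (B₁⁻¹.mulVec pB) =
      (8 : ℂ) • pB + (2 : ℂ) • B₁.mulVec pB - B₁⁻¹.mulVec pB := by
  rw [B₁_mulVec_pB, B₁_inv_mulVec_pB, B_eq_lowerUnitriangular, lowerUnitriangular_mulVec,
    lowerUnitriangular_mulVec, pB]
  simp only [smul_cons, smul_eq_mul, smul_empty, cons_add_cons, cons_sub_cons, empty_add_empty,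
    empty_sub_empty]
  refine ⟨vec3_eq ?_ ?_ ?_, vec3_eq ?_ ?_ ?_⟩ <;> grind [sqrt_two_sq, sqrt_three_mul_I_sq]
end

section
/- The vector p_V = (4, √2 - i√6, -2 - 2i√3)ᵀ satisfies the real linear relation p_V = -(7/4)·p_B - (3/8)·B₁·p_B + (1/8)·B₁⁻¹·p_B in ℂ³. -/
open Matrix Complex

noncomputable def pV : Fin 3 → ℂ :=
  ![4, (Real.sqrt 2 : ℂ) - (Real.sqrt 6 : ℂ) * Complex.I,
    -2 - 2 * (Real.sqrt 3 : ℂ) * Complex.I]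

/-! `B₁ = C ^ 2` with `C = A * B * A⁻¹`, and `C` is unipotent like `B`: `(C - 1) ^ 3 = 0`.
Hence `(C ^ 2)⁻¹ = 3 C ^ 2 - 8 C + 6`, so the combination
`-(7/4) - (3/8) C ^ 2 + (1/8) (C ^ 2)⁻¹` collapses to `-(1 + C)`, and the relation reduces to
computing the single vector `C *ᵥ p_B`. -/

namespace Matrix

theorem lowerUnitriangular_sub_one_pow_three {R : Type*} [Ring R] (a b c : R) :
    (!![1, 0, 0; a, 1, 0; b, c, 1] - 1) ^ 3 = 0 := by
  ext i j
  fin_cases i <;> fin_cases j <;> simp [pow_succ, one_fin_three]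

variable {n R : Type*} [Fintype n] [DecidableEq n] [CommRing R]

theorem conj_pow_of_isUnit_det {A : Matrix n n R} (hA : IsUnit A.det) (M : Matrix n n R)
    (k : ℕ) : (A * M * A⁻¹) ^ k = A * M ^ k * A⁻¹ := by
  have h := Units.conj_pow (nonsingInvUnit A hA) M k
  rwa [coe_units_inv] at h

theorem inv_sq_eq_of_sub_one_pow_three_eq_zero {M : Matrix n n R} (hM : (M - 1) ^ 3 = 0) :
    (M ^ 2)⁻¹ = 3 • M ^ 2 - 8 • M + 6 • 1 := by
  refine inv_eq_left_inv ?_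
  calc (3 • M ^ 2 - 8 • M + 6 • 1) * M ^ 2 = 1 + (M - 1) ^ 3 * (3 • M + 1) := by
        noncomm_ring
    _ = 1 := by rw [hM, zero_mul, add_zero]

theorem smul_add_smul_sq_add_smul_inv_sq_of_sub_one_pow_three_eq_zero {K : Type*} [Field K]
    [CharZero K] [Algebra K R] {M : Matrix n n R} (hM : (M - 1) ^ 3 = 0) :
    (-(7/4) : K) • 1 + (-(3/8) : K) • M ^ 2 + (1/8 : K) • (M ^ 2)⁻¹ = -(1 + M) := by
  rw [inv_sq_eq_of_sub_one_pow_three_eq_zero hM]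
  module

theorem inv_upperUnitriangular_fin_three (a b c : R) :
    !![1, a, b; 0, 1, c; 0, 0, 1]⁻¹ = !![1, -a, a * c - b; 0, 1, -c; 0, 0, 1] := by
  refine inv_eq_right_inv ?_
  rw [mul_fin_three, one_fin_three]
  ring_nf

end Matrix

theorem A_mul_B_mul_inv_A_mulVec_pB :
    (A * B * A⁻¹) *ᵥ pB =
      ![-4, -(√2 : ℂ) + (√6 : ℂ) * I, 1 + 2 * (√3 : ℂ) * I] := by
  have h2 : (√2 : ℂ) ^ 2 = 2 := by norm_cast; simp
  have h3 : (√3 : ℂ) ^ 2 = 3 := by norm_cast; simp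
  have h6 : (√6 : ℂ) = √2 * √3 := by
    norm_cast; rw [← Real.sqrt_mul zero_le_two]; norm_num
  have hv : A⁻¹ *ᵥ pB = ![-1 - √3 * I, -√2, 1] := by
    rw [A, inv_upperUnitriangular_fin_three]
    ext i
    fin_cases i <;> simp [pB]
    linear_combination -h2
  have hw : B *ᵥ ![-1 - √3 * I, -√2, 1] =
      ![-1 - √3 * I, -2 * √2 - √2 * √3 * I, 1 + 2 * √3 * I] := by
    ext i
    fin_cases i <;> simp [B]
    · ring
    · linear_combination I ^ 2 * h3 + 3 * I_sq + h2
  rw [← mulVec_mulVec, ← mulVec_mulVec, hv, hw, h6]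
  ext i
  fin_cases i <;> simp [A]
  · linear_combination (2 + √3 * I) * h2 + 2 * I ^ 2 * h3 + 6 * I_sq
  · ring

theorem stmt_17 :
    pV = (-(7/4) : ℝ) • pB + (-(3/8) : ℝ) • B₁.mulVec pB
      + ((1/8) : ℝ) • B₁⁻¹.mulVec pB := by
  have hA : IsUnit A.det := by simp [A, det_fin_three]
  have hB₁ : B₁ = (A * B * A⁻¹) ^ 2 := by rw [B₁, conj_pow_of_isUnit_det hA]
  have hC : (A * B * A⁻¹ - 1) ^ 3 = 0 := by
    rw [← mul_nonsing_inv A hA, ← sub_mul, ← mul_sub_one, conj_pow_of_isUnit_det hA, B,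
      lowerUnitriangular_sub_one_pow_three, mul_zero, zero_mul]
  nth_rw 1 [← one_mulVec pB]
  rw [← smul_mulVec, ← smul_mulVec, ← smul_mulVec, ← add_mulVec, ← add_mulVec,
    hB₁, smul_add_smul_sq_add_smul_inv_sq_of_sub_one_pow_three_eq_zero hC, neg_mulVec,
    add_mulVec, one_mulVec, A_mul_B_mul_inv_A_mulVec_pB]
  ext i
  fin_cases i <;> simp [pV, pB] <;> ring
end
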